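/- arXiv:1304.2998 — 9 statements merged into one kernel-verified Lean document; each statement's English description precedes it below -/
import Mathlib

section
/- Let a be a real number with 0 < a < 1. Then ∫₀^π sin(ν) · log((1 − a·sin(ν))/(1 + a·sin(ν))) dν = (2π/a)·(√(1 − a²) − 1). -/
/-!
Integrating by parts against `sin = (-cos)'` (the boundary terms vanish since `sin 0 = sin π = 0`)
and using `d/dx log ((1 - a sin x) / (1 + a sin x)) = -2a cos x / (1 - a² sin² x)` reduces the
integral to `-2a ∫₀^π cos² x / (1 - a² sin² x) dx`. Writing `s = √(1 - a²)`, this integrand is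
`(1 - s · s / (cos² x + s² sin² x)) / a²`, and `s / (cos² x + s² sin² x)` is the derivative of the
continuous branch of `arctan (s tan x)`, which increases by exactly `π` over `[0, π]`.
-/

open Real

lemma one_add_mul_sin_pos {a : ℝ} (ha : |a| < 1) (x : ℝ) : 0 < 1 + a * sin x := by
  have : |a * sin x| < 1 := by
    rw [abs_mul]
    exact (mul_le_of_le_one_right (abs_nonneg a) (abs_sin_le_one x)).trans_lt ha
  linarith [neg_abs_le (a * sin x)]

lemma one_sub_sq_mul_sin_sq_pos {a : ℝ} (ha : |a| < 1) (x : ℝ) : 0 < 1 - a ^ 2 * sin x ^ 2 := by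
  have hm := one_add_mul_sin_pos (a := -a) (by rwa [abs_neg]) x
  nlinarith [mul_pos hm (one_add_mul_sin_pos ha x)]

lemma cos_sq_add_mul_sin_sq_pos {s : ℝ} (hs : 0 < s) (x : ℝ) :
    0 < cos x ^ 2 + s * sin x ^ 2 := by
  have hpy := sin_sq_add_cos_sq x
  rcases le_total s 1 with h | h
  · nlinarith [mul_nonneg (sub_nonneg.2 h) (sq_nonneg (cos x))]
  · nlinarith [mul_nonneg (sub_nonneg.2 h) (sq_nonneg (sin x))]

/-- The continuous branch of `arctan (s * tan x)`: on `(-π/2, π/2)` the `arctan` term is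
`arctan (s * tan x) - x`, by the subtraction formula for `tan`. -/
noncomputable def arctanMulTan (s x : ℝ) : ℝ :=
  x + arctan ((s - 1) * sin x * cos x / (cos x ^ 2 + s * sin x ^ 2))

lemma arctanMulTan_zero (s : ℝ) : arctanMulTan s 0 = 0 := by
  simp [arctanMulTan]

lemma arctanMulTan_pi (s : ℝ) : arctanMulTan s π = π := by
  simp [arctanMulTan]

lemma hasDerivAt_arctanMulTan {s : ℝ} (hs : 0 < s) (x : ℝ) :
    HasDerivAt (arctanMulTan s) (s / (cos x ^ 2 + s ^ 2 * sin x ^ 2)) x := by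
  have hD := cos_sq_add_mul_sin_sq_pos hs x
  have hD2 := cos_sq_add_mul_sin_sq_pos (pow_pos hs 2) x
  have hnum : HasDerivAt (fun x => (s - 1) * sin x * cos x)
      ((s - 1) * cos x * cos x + (s - 1) * sin x * -sin x) x :=
    ((hasDerivAt_sin x).const_mul (s - 1)).mul (hasDerivAt_cos x)
  have hden : HasDerivAt (fun x => cos x ^ 2 + s * sin x ^ 2)
      (2 * cos x * -sin x + s * (2 * sin x * cos x)) x := by
    simpa using ((hasDerivAt_cos x).fun_pow 2).fun_add (((hasDerivAt_sin x).fun_pow 2).const_mul s)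
  refine ((hasDerivAt_id x).add ((hnum.fun_div hden hD.ne').arctan)).congr_deriv ?_
  field_simp
  rw [cos_sq']
  ring

lemma integral_div_cos_sq_add_sq_mul_sin_sq {s : ℝ} (hs : 0 < s) :
    ∫ x in (0 : ℝ)..π, s / (cos x ^ 2 + s ^ 2 * sin x ^ 2) = π := by
  have hcont : Continuous fun x => s / (cos x ^ 2 + s ^ 2 * sin x ^ 2) :=
    continuous_const.div (by fun_prop) fun x => (cos_sq_add_mul_sin_sq_pos (pow_pos hs 2) x).ne'
  rw [intervalIntegral.integral_eq_sub_of_hasDerivAt (fun x _ => hasDerivAt_arctanMulTan hs x)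
    (hcont.intervalIntegrable 0 π), arctanMulTan_pi, arctanMulTan_zero, sub_zero]

lemma integral_cos_sq_div_one_sub_sq_mul_sin_sq {a : ℝ} (ha0 : a ≠ 0) (ha : |a| < 1) :
    ∫ x in (0 : ℝ)..π, cos x ^ 2 / (1 - a ^ 2 * sin x ^ 2) = π * (1 - √(1 - a ^ 2)) / a ^ 2 := by
  have ha2 : a ^ 2 < 1 := (sq_lt_one_iff_abs_lt_one a).2 ha
  set s := √(1 - a ^ 2)
  have hs : 0 < s := sqrt_pos.2 (by linarith)
  have hs2 : s ^ 2 = 1 - a ^ 2 := sq_sqrt (by linarith)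
  have hsplit : ∀ x, cos x ^ 2 / (1 - a ^ 2 * sin x ^ 2)
      = (1 - s * (s / (cos x ^ 2 + s ^ 2 * sin x ^ 2))) / a ^ 2 := by
    intro x
    have hD := cos_sq_add_mul_sin_sq_pos (pow_pos hs 2) x
    have hD' : cos x ^ 2 + s ^ 2 * sin x ^ 2 = 1 - a ^ 2 * sin x ^ 2 := by
      rw [hs2, cos_sq']; ring
    rw [← hD']
    field_simp
    rw [hs2, cos_sq']
    ring
  have hcont : Continuous fun x => s / (cos x ^ 2 + s ^ 2 * sin x ^ 2) :=
    continuous_const.div (by fun_prop) fun x => (cos_sq_add_mul_sin_sq_pos (pow_pos hs 2) x).ne'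
  simp_rw [hsplit]
  rw [intervalIntegral.integral_div, intervalIntegral.integral_sub intervalIntegrable_const
    ((hcont.intervalIntegrable 0 π).const_mul s), intervalIntegral.integral_const_mul,
    integral_div_cos_sq_add_sq_mul_sin_sq hs, intervalIntegral.integral_const, smul_eq_mul]
  ring

lemma hasDerivAt_log_one_sub_mul_sin_div_one_add_mul_sin {a : ℝ} (ha : |a| < 1) (x : ℝ) :
    HasDerivAt (fun x => log ((1 - a * sin x) / (1 + a * sin x)))
      (-(2 * a * cos x) / (1 - a ^ 2 * sin x ^ 2)) x := by
  have hm := one_add_mul_sin_pos (a := -a) (by rwa [abs_neg]) x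
  have hp := one_add_mul_sin_pos ha x
  have hq : HasDerivAt (fun x => (1 - a * sin x) / (1 + a * sin x))
      ((-(a * cos x) * (1 + a * sin x) - (1 - a * sin x) * (a * cos x)) / (1 + a * sin x) ^ 2) x :=
    (((hasDerivAt_sin x).const_mul a).const_sub 1).fun_div
      (((hasDerivAt_sin x).const_mul a).const_add 1) hp.ne'
  refine (hq.log (div_pos (by linarith) hp).ne').congr_deriv ?_
  rw [show 1 - a ^ 2 * sin x ^ 2 = (1 - a * sin x) * (1 + a * sin x) by ring]
  field_simp
  ring

theorem integral_sin_log_I1 (a : ℝ) (h0 : 0 < a) (h1 : a < 1) :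
    ∫ ν in (0 : ℝ)..π,
        Real.sin ν * Real.log ((1 - a * Real.sin ν) / (1 + a * Real.sin ν))
      = (2 * π / a) * (Real.sqrt (1 - a ^ 2) - 1) := by
  have ha : |a| < 1 := by rwa [abs_of_pos h0]
  have hlogDeriv_cont : Continuous fun x => -(2 * a * cos x) / (1 - a ^ 2 * sin x ^ 2) :=
    (by fun_prop : Continuous _).div (by fun_prop) fun x => (one_sub_sq_mul_sin_sq_pos ha x).ne'
  have hparts := intervalIntegral.integral_mul_deriv_eq_deriv_mul (a := 0) (b := π)
    (fun x _ => hasDerivAt_log_one_sub_mul_sin_div_one_add_mul_sin ha x)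
    (fun x _ => by simpa using (hasDerivAt_cos x).neg)
    (hlogDeriv_cont.intervalIntegrable 0 π) (continuous_sin.intervalIntegrable 0 π)
  have hrest : ∫ x in (0 : ℝ)..π, -(2 * a * cos x) / (1 - a ^ 2 * sin x ^ 2) * (-cos) x
      = 2 * a * ∫ x in (0 : ℝ)..π, cos x ^ 2 / (1 - a ^ 2 * sin x ^ 2) := by
    rw [← intervalIntegral.integral_const_mul]
    congr 1 with x
    simp only [Pi.neg_apply]
    ring
  calc ∫ x in (0 : ℝ)..π, sin x * log ((1 - a * sin x) / (1 + a * sin x))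
      _ = -(2 * a * ∫ x in (0 : ℝ)..π, cos x ^ 2 / (1 - a ^ 2 * sin x ^ 2)) := by
        simp_rw [mul_comm (sin _), hparts, hrest, sin_pi, sin_zero]
        simp
      _ = 2 * π / a * (√(1 - a ^ 2) - 1) := by
        rw [integral_cos_sq_div_one_sub_sq_mul_sin_sq h0.ne' ha]
        field_simp
        ring
end

section
/- Let λ₀ be a real number with 0 < λ₀ < 1/2 and set a = 4λ₀/(1 + 4λ₀²). Then (1/π) ∫₀^π sin²(ν)·cos(ν) · log((1 − a·cos(ν))/(1 + a·cos(ν))) dν = −λ₀ + (4/3)·λ₀³. -/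
/-!
Integrating by parts against `sin³ ν / 3` replaces the logarithm by its derivative
`2a sin ν / (1 - a² cos² ν)`, so the integral is `-(2a/3) ∫₀^π sin⁴ ν / (1 - a² cos² ν)`.
Dividing `(1 - t)²` by `1 - a² t` with `t = cos² ν` leaves a quadratic in `cos ν` plus
`(1 - a²)² / (1 - a² cos² ν)`, and `∫₀^π 1 / (1 - a² cos² ν) = π / √(1 - a²)`.
For `a = 4λ₀ / (1 + 4λ₀²)` the square root is rational in `λ₀`, and everything collapses
to `-λ₀ + 4λ₀³ / 3`.
-/

open Real

lemma sin_sq_add_mul_cos_sq_pos {b : ℝ} (hb : 0 < b) (ν : ℝ) : 0 < sin ν ^ 2 + b * cos ν ^ 2 := by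
  rcases eq_or_ne (sin ν) 0 with h | h
  · have hsc := sin_sq_add_cos_sq ν
    rw [h] at hsc ⊢
    nlinarith
  · positivity

/-- The antiderivative is the continuous branch of `arctan (tan ν / b)`, written via
`tan (A - ν) = (1 - b) sin ν cos ν / (sin² ν + b cos² ν)` for `A = arctan (tan ν / b)`. -/
lemma hasDerivAt_add_arctan {b : ℝ} (hb : 0 < b) (ν : ℝ) :
    HasDerivAt (fun ν => ν + arctan ((1 - b) * sin ν * cos ν / (sin ν ^ 2 + b * cos ν ^ 2)))
      (b / (sin ν ^ 2 + b ^ 2 * cos ν ^ 2)) ν := by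
  have hD := sin_sq_add_mul_cos_sq_pos hb ν
  have hE := sin_sq_add_mul_cos_sq_pos (pow_pos hb 2) ν
  have hN : HasDerivAt (fun ν => (1 - b) * sin ν * cos ν)
      ((1 - b) * (cos ν ^ 2 - sin ν ^ 2)) ν := by
    refine (((hasDerivAt_sin ν).const_mul (1 - b)).mul (hasDerivAt_cos ν)).congr_deriv ?_
    ring
  have hD' : HasDerivAt (fun ν => sin ν ^ 2 + b * cos ν ^ 2) (2 * (1 - b) * sin ν * cos ν) ν := by
    refine (((hasDerivAt_sin ν).pow 2).add (((hasDerivAt_cos ν).pow 2).const_mul b)).congr_deriv ?_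
    push_cast; ring
  refine ((hasDerivAt_id ν).add ((hN.div hD' hD.ne').arctan)).congr_deriv ?_
  simp only [Pi.div_apply]
  field_simp
  rw [sin_sq]
  ring

lemma integral_div_sin_sq_add_sq_mul_cos_sq {b : ℝ} (hb : 0 < b) :
    ∫ ν in (0 : ℝ)..π, b / (sin ν ^ 2 + b ^ 2 * cos ν ^ 2) = π := by
  have hcont : Continuous fun ν => b / (sin ν ^ 2 + b ^ 2 * cos ν ^ 2) :=
    continuous_const.div (by fun_prop) fun ν => (sin_sq_add_mul_cos_sq_pos (pow_pos hb 2) ν).ne'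
  rw [intervalIntegral.integral_eq_sub_of_hasDerivAt (fun ν _ => hasDerivAt_add_arctan hb ν)
    (hcont.intervalIntegrable 0 π)]
  simp

lemma abs_mul_cos_lt_one {a : ℝ} (ha : |a| < 1) (ν : ℝ) : |a * cos ν| < 1 := by
  rw [abs_mul]
  exact (mul_le_of_le_one_right (abs_nonneg a) (abs_cos_le_one ν)).trans_lt ha

lemma one_sub_sq_pos_of_abs_lt_one {a : ℝ} (ha : |a| < 1) : 0 < 1 - a ^ 2 := by
  rwa [sub_pos, sq_lt_one_iff_abs_lt_one]

lemma one_sub_sq_mul_cos_sq_pos {a : ℝ} (ha : |a| < 1) (ν : ℝ) : 0 < 1 - a ^ 2 * cos ν ^ 2 := by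
  rw [← mul_pow]
  exact one_sub_sq_pos_of_abs_lt_one (abs_mul_cos_lt_one ha ν)

lemma integral_inv_one_sub_sq_mul_cos_sq {a : ℝ} (ha : |a| < 1) :
    ∫ ν in (0 : ℝ)..π, (1 - a ^ 2 * cos ν ^ 2)⁻¹ = π / √(1 - a ^ 2) := by
  have h1a := one_sub_sq_pos_of_abs_lt_one ha
  set b := √(1 - a ^ 2)
  have hb : 0 < b := sqrt_pos.mpr h1a
  have hb2 : b ^ 2 = 1 - a ^ 2 := sq_sqrt h1a.le
  have hpt : ∀ ν, (1 - a ^ 2 * cos ν ^ 2)⁻¹ = b⁻¹ * (b / (sin ν ^ 2 + b ^ 2 * cos ν ^ 2)) := by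
    intro ν
    rw [← mul_div_assoc, inv_mul_cancel₀ hb.ne', hb2, sin_sq]
    ring
  simp_rw [hpt, intervalIntegral.integral_const_mul, integral_div_sin_sq_add_sq_mul_cos_sq hb]
  ring

lemma hasDerivAt_log_one_sub_div_one_add {a : ℝ} (ha : |a| < 1) (ν : ℝ) :
    HasDerivAt (fun ν => log ((1 - a * cos ν) / (1 + a * cos ν)))
      (2 * a * sin ν / (1 - a ^ 2 * cos ν ^ 2)) ν := by
  obtain ⟨hlt, hgt⟩ := abs_lt.mp (abs_mul_cos_lt_one ha ν)
  have hsub : 0 < 1 - a * cos ν := by linarith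
  have hadd : 0 < 1 + a * cos ν := by linarith
  have hquot := (((hasDerivAt_cos ν).const_mul a).const_sub 1).div
    (((hasDerivAt_cos ν).const_mul a).const_add 1) hadd.ne'
  refine (hquot.log (div_pos hsub hadd).ne').congr_deriv ?_
  have hprod : 1 - a ^ 2 * cos ν ^ 2 = (1 - a * cos ν) * (1 + a * cos ν) := by ring
  simp only [Pi.div_apply]
  rw [hprod]
  field_simp
  ring

lemma integral_sin_sq_mul_cos_mul_log_eq {a : ℝ} (ha : |a| < 1) :
    ∫ ν in (0 : ℝ)..π, sin ν ^ 2 * cos ν * log ((1 - a * cos ν) / (1 + a * cos ν)) =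
      -(2 * a / 3) * ∫ ν in (0 : ℝ)..π, sin ν ^ 4 / (1 - a ^ 2 * cos ν ^ 2) := by
  have hv : ∀ ν, HasDerivAt (fun ν => sin ν ^ 3 / 3) (sin ν ^ 2 * cos ν) ν := fun ν => by
    refine (((hasDerivAt_sin ν).pow 3).div_const 3).congr_deriv ?_
    push_cast; ring
  have hu'_cont : Continuous fun ν => 2 * a * sin ν / (1 - a ^ 2 * cos ν ^ 2) :=
    (by fun_prop : Continuous _).div (by fun_prop) fun ν => (one_sub_sq_mul_cos_sq_pos ha ν).ne'
  calc ∫ ν in (0 : ℝ)..π, sin ν ^ 2 * cos ν * log ((1 - a * cos ν) / (1 + a * cos ν))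
      = ∫ ν in (0 : ℝ)..π, log ((1 - a * cos ν) / (1 + a * cos ν)) * (sin ν ^ 2 * cos ν) :=
        intervalIntegral.integral_congr fun ν _ => mul_comm _ _
    _ = -∫ ν in (0 : ℝ)..π, 2 * a * sin ν / (1 - a ^ 2 * cos ν ^ 2) * (sin ν ^ 3 / 3) := by
        rw [intervalIntegral.integral_mul_deriv_eq_deriv_mul
          (fun ν _ => hasDerivAt_log_one_sub_div_one_add ha ν) (fun ν _ => hv ν)
          (hu'_cont.intervalIntegrable 0 π) ((by fun_prop : Continuous _).intervalIntegrable 0 π)]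
        simp
    _ = -(2 * a / 3) * ∫ ν in (0 : ℝ)..π, sin ν ^ 4 / (1 - a ^ 2 * cos ν ^ 2) := by
        rw [← intervalIntegral.integral_const_mul, ← intervalIntegral.integral_neg]
        congr 1; ext ν; ring

lemma integral_sin_pow_four_div_one_sub_sq_mul_cos_sq {a : ℝ} (ha : |a| < 1) :
    a ^ 4 * ∫ ν in (0 : ℝ)..π, sin ν ^ 4 / (1 - a ^ 2 * cos ν ^ 2) =
      π * (3 * a ^ 2 / 2 - 1 + (1 - a ^ 2) * √(1 - a ^ 2)) := by
  have hpos := one_sub_sq_mul_cos_sq_pos ha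
  have hdiv : ∀ ν, a ^ 4 * (sin ν ^ 4 / (1 - a ^ 2 * cos ν ^ 2)) =
      (2 * a ^ 2 - 1 - a ^ 2 * cos ν ^ 2) + (1 - a ^ 2) ^ 2 * (1 - a ^ 2 * cos ν ^ 2)⁻¹ := by
    intro ν
    have hne := (hpos ν).ne'
    field_simp
    linear_combination a ^ 4 * (sin ν ^ 2 + 1 - cos ν ^ 2) * sin_sq_add_cos_sq ν
  have hpoly : Continuous fun ν => 2 * a ^ 2 - 1 - a ^ 2 * cos ν ^ 2 := by fun_prop
  have hinv : Continuous fun ν => (1 - a ^ 2 * cos ν ^ 2)⁻¹ :=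
    (by fun_prop : Continuous _).inv₀ fun ν => (hpos ν).ne'
  rw [← intervalIntegral.integral_const_mul, intervalIntegral.integral_congr fun ν _ => hdiv ν,
    intervalIntegral.integral_add (hpoly.intervalIntegrable 0 π)
      ((hinv.const_mul _).intervalIntegrable 0 π),
    intervalIntegral.integral_sub intervalIntegrable_const
      ((by fun_prop : Continuous fun ν => a ^ 2 * cos ν ^ 2).intervalIntegrable 0 π),
    intervalIntegral.integral_const_mul, intervalIntegral.integral_const_mul, integral_cos_sq,
    integral_inv_one_sub_sq_mul_cos_sq ha]
  have hb2 : √(1 - a ^ 2) ^ 2 = 1 - a ^ 2 := sq_sqrt (one_sub_sq_pos_of_abs_lt_one ha).le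
  simp only [sin_pi, sin_zero, intervalIntegral.integral_const, smul_eq_mul]
  set b := √(1 - a ^ 2)
  rw [← hb2]
  field_simp
  ring

lemma pow_three_mul_integral_sin_sq_mul_cos_mul_log {a : ℝ} (ha : |a| < 1) :
    a ^ 3 * ∫ ν in (0 : ℝ)..π, sin ν ^ 2 * cos ν * log ((1 - a * cos ν) / (1 + a * cos ν)) =
      π / 3 * (2 - 3 * a ^ 2 - 2 * (1 - a ^ 2) * √(1 - a ^ 2)) := by
  rw [integral_sin_sq_mul_cos_mul_log_eq ha]
  linear_combination (-2 / 3 : ℝ) * integral_sin_pow_four_div_one_sub_sq_mul_cos_sq ha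

theorem expectation_sin_sq_cos_log (lam0 : ℝ) (h0 : 0 < lam0) (h1 : lam0 < 1 / 2) :
    (1 / π) * ∫ ν in (0 : ℝ)..π,
        Real.sin ν ^ 2 * Real.cos ν *
          Real.log ((1 - (4 * lam0 / (1 + 4 * lam0 ^ 2)) * Real.cos ν) /
            (1 + (4 * lam0 / (1 + 4 * lam0 ^ 2)) * Real.cos ν))
      = -lam0 + (4 / 3) * lam0 ^ 3 := by
  have hden : 0 < 1 + 4 * lam0 ^ 2 := by positivity
  set a := 4 * lam0 / (1 + 4 * lam0 ^ 2) with ha_def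
  have ha0 : 0 < a := by positivity
  have ha : |a| < 1 := by
    rw [abs_of_pos ha0, div_lt_one hden]
    nlinarith
  -- `a = 2 t / (1 + t ^ 2)` with `t = 2 λ₀`, so `1 - a ^ 2` is a perfect square
  have hsqrt : √(1 - a ^ 2) = (1 - 4 * lam0 ^ 2) / (1 + 4 * lam0 ^ 2) := by
    rw [sqrt_eq_iff_eq_sq (one_sub_sq_pos_of_abs_lt_one ha).le
      (div_nonneg (by nlinarith) hden.le), ha_def]
    field_simp
    ring
  have key := pow_three_mul_integral_sin_sq_mul_cos_mul_log ha
  rw [hsqrt] at key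
  rw [← mul_right_inj' (pow_ne_zero 3 ha0.ne'), ← mul_assoc, mul_right_comm, key, ha_def]
  field_simp
  ring
end

section
/- Let b be a nonzero real number. Then ∫₀^{π/2} cos(ν) · arctan(b·cos(ν)) dν = (π/(2b)) · (√(b² + 1) − 1). -/
/-!
Write `cos ν * arctan (b * cos ν) = ∫₀ᵇ cos² ν / (1 + t² cos² ν) dt` and exchange the two
integrals. For fixed `t`, the `ν`-integral is elementary: with `c = √(t² + 1)` one has
`c² cos² ν + sin² ν = 1 + t² cos² ν`, and `∫₀^{π/2} dν / (a² cos² ν + b² sin² ν) = π / (2ab)`,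
which gives `π / (2 c (c + 1))`. This has the antiderivative `(π / 2) · t / (1 + c)`, and
`b / (1 + √(b² + 1)) = (√(b² + 1) - 1) / b`.
-/

open Real MeasureTheory

lemma mul_arctan_mul_eq_integral (x b : ℝ) :
    x * arctan (b * x) = ∫ t in (0 : ℝ)..b, x ^ 2 / (1 + t ^ 2 * x ^ 2) := by
  have h := intervalIntegral.mul_integral_comp_mul_left (a := 0) (b := b)
    (f := fun u : ℝ => (1 + u ^ 2)⁻¹) x
  simp only [integral_inv_one_add_sq, mul_zero, arctan_zero, sub_zero] at h
  rw [mul_comm b, ← h, ← intervalIntegral.integral_const_mul,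
    ← intervalIntegral.integral_const_mul]
  refine intervalIntegral.integral_congr fun t _ => ?_
  field_simp

lemma intervalIntegral_intervalIntegral_swap_of_continuous {F : ℝ → ℝ → ℝ}
    (hF : Continuous F.uncurry) (a b c d : ℝ) :
    ∫ x in a..b, ∫ y in c..d, F x y = ∫ y in c..d, ∫ x in a..b, F x y :=
  intervalIntegral_intervalIntegral_swap <|
    (hF.continuousOn.integrableOn_compact (isCompact_uIcc.prod isCompact_uIcc)).mono_set
      (Set.prod_mono Set.uIoc_subset_uIcc Set.uIoc_subset_uIcc)

lemma mul_cos_sq_add_mul_sin_sq_pos {a b : ℝ} (ha : 0 < a) (hb : 0 < b) (ν : ℝ) :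
    0 < a * cos ν ^ 2 + b * sin ν ^ 2 := by
  calc 0 < min a b := lt_min ha hb
    _ = min a b * cos ν ^ 2 + min a b * sin ν ^ 2 := by rw [← mul_add, cos_sq_add_sin_sq, mul_one]
    _ ≤ a * cos ν ^ 2 + b * sin ν ^ 2 := by gcongr; exacts [min_le_left a b, min_le_right a b]

/-- On `(-π / 2, π / 2)` this antiderivative equals `arctan (b tan ν / a)`; the subtraction
formula for `arctan` turns it into a form that stays continuous at `ν = π / 2`. -/
lemma hasDerivAt_sub_arctan {a b : ℝ} (ha : 0 < a) (hb : 0 < b) (ν : ℝ) :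
    HasDerivAt (fun ν => ν - arctan ((a - b) * sin ν * cos ν / (a * cos ν ^ 2 + b * sin ν ^ 2)))
      (a * b / (a ^ 2 * cos ν ^ 2 + b ^ 2 * sin ν ^ 2)) ν := by
  have hsc := cos_sq_add_sin_sq ν
  have hD := (mul_cos_sq_add_mul_sin_sq_pos ha hb ν).ne'
  have hE := (mul_cos_sq_add_mul_sin_sq_pos (pow_pos ha 2) (pow_pos hb 2) ν).ne'
  have hN : HasDerivAt (fun ν => (a - b) * sin ν * cos ν)
      ((a - b) * cos ν * cos ν + (a - b) * sin ν * -sin ν) ν :=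
    ((hasDerivAt_sin ν).const_mul (a - b)).mul (hasDerivAt_cos ν)
  have hD' : HasDerivAt (fun ν => a * cos ν ^ 2 + b * sin ν ^ 2)
      (a * (2 * cos ν * -sin ν) + b * (2 * sin ν * cos ν)) ν := by
    refine ((((hasDerivAt_cos ν).pow 2).const_mul a).add
      (((hasDerivAt_sin ν).pow 2).const_mul b)).congr_deriv ?_
    ring
  have hQ : HasDerivAt (fun ν => (a - b) * sin ν * cos ν / (a * cos ν ^ 2 + b * sin ν ^ 2))
      ((a - b) * (a * cos ν ^ 2 - b * sin ν ^ 2) / (a * cos ν ^ 2 + b * sin ν ^ 2) ^ 2) ν := by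
    refine (hN.div hD' hD).congr_deriv ?_
    congr 1
    linear_combination ((a - b) * (a * cos ν ^ 2 - b * sin ν ^ 2)) * hsc
  have h1 : 1 + ((a - b) * sin ν * cos ν / (a * cos ν ^ 2 + b * sin ν ^ 2)) ^ 2
      = (a ^ 2 * cos ν ^ 2 + b ^ 2 * sin ν ^ 2) / (a * cos ν ^ 2 + b * sin ν ^ 2) ^ 2 := by
    field_simp
    linear_combination (a ^ 2 * cos ν ^ 2 + b ^ 2 * sin ν ^ 2) * hsc
  refine ((hasDerivAt_id ν).sub hQ.arctan).congr_deriv ?_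
  rw [h1]
  field_simp
  linear_combination (a * b) * hsc

lemma integral_inv_sq_mul_cos_sq_add_sq_mul_sin_sq {a b : ℝ} (ha : 0 < a) (hb : 0 < b) :
    ∫ ν in (0 : ℝ)..(π / 2), (a ^ 2 * cos ν ^ 2 + b ^ 2 * sin ν ^ 2)⁻¹ = π / (2 * (a * b)) := by
  have hE ν := (mul_cos_sq_add_mul_sin_sq_pos (pow_pos ha 2) (pow_pos hb 2) ν).ne'
  have hFTC := intervalIntegral.integral_eq_sub_of_hasDerivAt
    (fun ν _ => hasDerivAt_sub_arctan ha hb ν)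
    ((continuous_const.div (by fun_prop) hE).intervalIntegrable 0 (π / 2))
  simp only [sin_pi_div_two, cos_pi_div_two, sin_zero, mul_zero, zero_mul, zero_div, arctan_zero,
    sub_zero] at hFTC
  simp_rw [div_eq_mul_inv (a * b), intervalIntegral.integral_const_mul] at hFTC
  rw [eq_div_iff (by positivity)]
  linear_combination 2 * hFTC

lemma integral_cos_sq_div_one_add_sq_mul_cos_sq (t : ℝ) :
    ∫ ν in (0 : ℝ)..(π / 2), cos ν ^ 2 / (1 + t ^ 2 * cos ν ^ 2)
      = π / 2 * (√(t ^ 2 + 1) * (√(t ^ 2 + 1) + 1))⁻¹ := by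
  rcases eq_or_ne t 0 with rfl | ht
  · norm_num [integral_cos_sq]
    ring
  have hc : 0 < √(t ^ 2 + 1) := by positivity
  have hc2 : √(t ^ 2 + 1) ^ 2 = t ^ 2 + 1 := sq_sqrt (by positivity)
  have hD ν : 1 + t ^ 2 * cos ν ^ 2 ≠ 0 := by positivity
  have h1 : ∫ ν in (0 : ℝ)..(π / 2), (1 + t ^ 2 * cos ν ^ 2)⁻¹ = π / (2 * √(t ^ 2 + 1)) := by
    rw [← mul_one √(t ^ 2 + 1), ← integral_inv_sq_mul_cos_sq_add_sq_mul_sin_sq hc one_pos]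
    refine intervalIntegral.integral_congr fun ν _ => ?_
    rw [hc2]
    congr 1
    linear_combination -sin_sq_add_cos_sq ν
  have h2 ν : cos ν ^ 2 / (1 + t ^ 2 * cos ν ^ 2)
      = (t ^ 2)⁻¹ * (1 - (1 + t ^ 2 * cos ν ^ 2)⁻¹) := by
    field_simp
    ring
  have hint : IntervalIntegrable (fun ν => (1 + t ^ 2 * cos ν ^ 2)⁻¹) volume 0 (π / 2) :=
    ((by fun_prop : Continuous fun ν => 1 + t ^ 2 * cos ν ^ 2).inv₀ hD).intervalIntegrable _ _
  simp_rw [h2]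
  rw [intervalIntegral.integral_const_mul,
    intervalIntegral.integral_sub intervalIntegrable_const hint, h1,
    intervalIntegral.integral_const, sub_zero, smul_eq_mul, mul_one]
  field_simp
  linear_combination hc2

lemma hasDerivAt_div_one_add_sqrt_sq_add_one (t : ℝ) :
    HasDerivAt (fun t => t / (1 + √(t ^ 2 + 1))) (√(t ^ 2 + 1) * (√(t ^ 2 + 1) + 1))⁻¹ t := by
  have hc2 : √(t ^ 2 + 1) ^ 2 = t ^ 2 + 1 := sq_sqrt (by positivity)
  have hsqrt : HasDerivAt (fun t => √(t ^ 2 + 1)) (2 * t / (2 * √(t ^ 2 + 1))) t := by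
    simpa using ((hasDerivAt_pow 2 t).add_const 1).sqrt (by positivity)
  refine ((hasDerivAt_id t).div (hsqrt.const_add 1) (by positivity)).congr_deriv ?_
  simp only [id]
  field_simp
  linear_combination (√(t ^ 2 + 1) + 1) * hc2

lemma integral_inv_sqrt_mul_sqrt_add_one (b : ℝ) :
    ∫ t in (0 : ℝ)..b, (√(t ^ 2 + 1) * (√(t ^ 2 + 1) + 1))⁻¹ = b / (1 + √(b ^ 2 + 1)) := by
  have hcont : Continuous fun t : ℝ => (√(t ^ 2 + 1) * (√(t ^ 2 + 1) + 1))⁻¹ :=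
    (by fun_prop : Continuous fun t : ℝ => √(t ^ 2 + 1) * (√(t ^ 2 + 1) + 1)).inv₀
      fun t => by positivity
  rw [intervalIntegral.integral_eq_sub_of_hasDerivAt
    (fun t _ => hasDerivAt_div_one_add_sqrt_sq_add_one t) (hcont.intervalIntegrable _ _)]
  simp

lemma div_one_add_sqrt_sq_add_one (b : ℝ) : b / (1 + √(b ^ 2 + 1)) = (√(b ^ 2 + 1) - 1) / b := by
  rcases eq_or_ne b 0 with rfl | hb
  · simp
  rw [div_eq_div_iff (by positivity) hb]
  linear_combination -sq_sqrt (by positivity : 0 ≤ b ^ 2 + 1)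

theorem integral_cos_arctan_general (b : ℝ) :
    ∫ ν in (0 : ℝ)..(π / 2), Real.cos ν * Real.arctan (b * Real.cos ν)
      = (π / (2 * b)) * (Real.sqrt (b ^ 2 + 1) - 1) := by
  have hF : Continuous (Function.uncurry fun ν t : ℝ => cos ν ^ 2 / (1 + t ^ 2 * cos ν ^ 2)) :=
    (by fun_prop : Continuous fun p : ℝ × ℝ => cos p.1 ^ 2).div (by fun_prop) fun p => by positivity
  calc ∫ ν in (0 : ℝ)..(π / 2), cos ν * arctan (b * cos ν)
      = ∫ ν in (0 : ℝ)..(π / 2), ∫ t in (0 : ℝ)..b, cos ν ^ 2 / (1 + t ^ 2 * cos ν ^ 2) :=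
        intervalIntegral.integral_congr fun ν _ => mul_arctan_mul_eq_integral _ _
    _ = ∫ t in (0 : ℝ)..b, ∫ ν in (0 : ℝ)..(π / 2), cos ν ^ 2 / (1 + t ^ 2 * cos ν ^ 2) :=
        intervalIntegral_intervalIntegral_swap_of_continuous hF _ _ _ _
    _ = π / 2 * (b / (1 + √(b ^ 2 + 1))) := by
        simp_rw [integral_cos_sq_div_one_add_sq_mul_cos_sq, intervalIntegral.integral_const_mul,
          integral_inv_sqrt_mul_sqrt_add_one]
    _ = π / (2 * b) * (√(b ^ 2 + 1) - 1) := by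
        rw [div_one_add_sqrt_sq_add_one]
        ring

theorem integral_cos_arctan (b : ℝ) (hb : b ≠ 0) :
    ∫ ν in (0 : ℝ)..(π / 2), Real.cos ν * Real.arctan (b * Real.cos ν)
      = (π / (2 * b)) * (Real.sqrt (b ^ 2 + 1) - 1) :=
  integral_cos_arctan_general b
end

section
/- Let λ₀ be a real number with 0 < λ₀ < 1/2. Then (1/π) ∫₀^π |cos(ν)| · arctan(4λ₀·|cos(ν)|/(4λ₀² − 1)) dν = −2λ₀. -/
/-!
Writing `k = 4λ₀ / (4λ₀² - 1)`, the integrand is `f |cos ν|` with `f t = t · arctan (k t)`, and the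
symmetry `ν ↦ π - ν` reduces the integral to `2 ∫₀^{π/2} cos ν · arctan (k cos ν) dν`. Integrating by
parts leaves `∫ k sin² ν / (1 + k² cos² ν)`, which is elementary once `1 + k² cos² ν` is written as
`c² cos² ν + sin² ν` with `c = √(1 + k²)`: the result is `π (c - 1) / k`. For our `k` one has
`c = (1 + 4λ₀²) / (1 - 4λ₀²)`, and `(c - 1) / k = -2λ₀`.
-/

open Real

lemma mul_cos_sq_add_sin_sq_pos {a : ℝ} (ha : 0 < a) (x : ℝ) : 0 < a * cos x ^ 2 + sin x ^ 2 := by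
  rcases eq_or_ne (cos x) 0 with h | h
  · nlinarith [sin_sq_add_cos_sq x]
  · positivity

/-- For `0 < c`, a branch of `y ↦ arctan (tan y / c)` that is smooth on all of `ℝ`: the arctangent
term is `arctan (tan y / c) - y`, written with the tangent subtraction formula. -/
noncomputable def arctanTanDiv (c y : ℝ) : ℝ :=
  y + arctan ((1 - c) * (sin y * cos y) / (c * cos y ^ 2 + sin y ^ 2))

lemma arctanTanDiv_zero (c : ℝ) : arctanTanDiv c 0 = 0 := by
  simp [arctanTanDiv]

lemma arctanTanDiv_pi_div_two (c : ℝ) : arctanTanDiv c (π / 2) = π / 2 := by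
  simp [arctanTanDiv]

lemma hasDerivAt_arctanTanDiv {c : ℝ} (hc : 0 < c) (x : ℝ) :
    HasDerivAt (arctanTanDiv c) (c / (c ^ 2 * cos x ^ 2 + sin x ^ 2)) x := by
  have hnum : HasDerivAt (fun y => (1 - c) * (sin y * cos y))
      ((1 - c) * (cos x ^ 2 - sin x ^ 2)) x :=
    (((hasDerivAt_sin x).mul (hasDerivAt_cos x)).const_mul (1 - c)).congr_deriv (by ring)
  have hden : HasDerivAt (fun y => c * cos y ^ 2 + sin y ^ 2) (2 * (1 - c) * sin x * cos x) x :=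
    ((((hasDerivAt_cos x).pow 2).const_mul c).add ((hasDerivAt_sin x).pow 2)).congr_deriv
      (by norm_num; ring)
  have hv := mul_cos_sq_add_sin_sq_pos hc x
  have hD := mul_cos_sq_add_sin_sq_pos (pow_pos hc 2) x
  refine ((hasDerivAt_id x).add (hnum.div hden hv.ne').arctan).congr_deriv ?_
  simp only [Pi.div_apply]
  field_simp
  linear_combination
    (c * sin x ^ 2 + c ^ 3 * cos x ^ 2) * (sin x ^ 2 + cos x ^ 2) * sin_sq_add_cos_sq x

lemma hasDerivAt_sin_mul_arctan_mul_cos (k x : ℝ) :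
    HasDerivAt (fun y => sin y * arctan (k * cos y))
      (cos x * arctan (k * cos x) - k * sin x ^ 2 / (1 + k ^ 2 * cos x ^ 2)) x :=
  ((hasDerivAt_sin x).mul ((hasDerivAt_cos x).const_mul k).arctan).congr_deriv (by ring)

lemma hasDerivAt_cos_mul_arctan_mul_cos_antideriv {k : ℝ} (hk : k ≠ 0) (x : ℝ) :
    HasDerivAt
      (fun y => sin y * arctan (k * cos y) + (√(1 + k ^ 2) * arctanTanDiv √(1 + k ^ 2) y - y) / k)
      (cos x * arctan (k * cos x)) x := by
  have hc : 0 < √(1 + k ^ 2) := by positivity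
  have hc2 : √(1 + k ^ 2) ^ 2 = 1 + k ^ 2 := sq_sqrt (by positivity)
  refine ((hasDerivAt_sin_mul_arctan_mul_cos k x).add
    ((((hasDerivAt_arctanTanDiv hc x).const_mul _).sub (hasDerivAt_id x)).div_const k)).congr_deriv ?_
  have hD : √(1 + k ^ 2) ^ 2 * cos x ^ 2 + sin x ^ 2 = 1 + k ^ 2 * cos x ^ 2 := by
    linear_combination cos x ^ 2 * hc2 + sin_sq_add_cos_sq x
  rw [hD]
  field_simp
  rw [hc2]
  linear_combination -k ^ 2 * sin_sq_add_cos_sq x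

theorem integral_cos_mul_arctan_mul_cos (k : ℝ) :
    ∫ y in 0..π / 2, cos y * arctan (k * cos y) = π / 2 * ((√(1 + k ^ 2) - 1) / k) := by
  rcases eq_or_ne k 0 with rfl | hk
  · simp
  rw [intervalIntegral.integral_eq_sub_of_hasDerivAt
    (fun x _ => hasDerivAt_cos_mul_arctan_mul_cos_antideriv hk x)
    (Continuous.intervalIntegrable (by fun_prop) _ _)]
  simp only [sin_pi_div_two, cos_pi_div_two, sin_zero, cos_zero, arctanTanDiv_pi_div_two,
    arctanTanDiv_zero, arctan_zero, mul_zero, zero_mul, mul_one, zero_add, add_zero, sub_self,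
    sub_zero, zero_div]
  ring

theorem integral_comp_abs_cos {f : ℝ → ℝ} (hf : Continuous f) :
    ∫ y in 0..π, f |cos y| = 2 * ∫ y in 0..π / 2, f (cos y) := by
  have hint : ∀ a b : ℝ, IntervalIntegrable (fun y => f |cos y|) MeasureTheory.volume a b :=
    fun a b => (hf.comp continuous_cos.abs).intervalIntegrable a b
  have hreflect : ∫ y in π / 2..π, f |cos y| = ∫ y in 0..π / 2, f |cos y| := by
    have := intervalIntegral.integral_comp_sub_left (a := 0) (b := π / 2) (fun y => f |cos y|) π
    simp only [cos_pi_sub, abs_neg, sub_zero, show π - π / 2 = π / 2 by ring] at this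
    exact this.symm
  have hcos_nonneg : ∫ y in 0..π / 2, f |cos y| = ∫ y in 0..π / 2, f (cos y) := by
    refine intervalIntegral.integral_congr fun y hy => ?_
    rw [Set.uIcc_of_le (by positivity)] at hy
    simp only [abs_of_nonneg (cos_nonneg_of_mem_Icc ⟨by linarith [hy.1, pi_pos], hy.2⟩)]
  rw [← intervalIntegral.integral_add_adjacent_intervals (hint 0 (π / 2)) (hint (π / 2) π),
    hreflect, hcos_nonneg, two_mul]

theorem integral_abs_cos_mul_arctan_mul_abs_cos (k : ℝ) :
    ∫ y in 0..π, |cos y| * arctan (k * |cos y|) = π * ((√(1 + k ^ 2) - 1) / k) := by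
  rw [integral_comp_abs_cos (f := fun t => t * arctan (k * t)) (by fun_prop),
    integral_cos_mul_arctan_mul_cos]
  ring

theorem expectation_abs_cos_arctan (lam0 : ℝ) (h0 : 0 < lam0) (h1 : lam0 < 1 / 2) :
    (1 / π) * ∫ ν in (0 : ℝ)..π,
        |Real.cos ν| * Real.arctan (4 * lam0 * |Real.cos ν| / (4 * lam0 ^ 2 - 1))
      = -2 * lam0 := by
  have hlam : 4 * lam0 ^ 2 < 1 := by nlinarith
  have hne : 4 * lam0 ^ 2 - 1 ≠ 0 := by linarith
  have hne' : 1 - 4 * lam0 ^ 2 ≠ 0 := by linarith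
  set k := 4 * lam0 / (4 * lam0 ^ 2 - 1) with hk
  have hsqrt : √(1 + k ^ 2) = (1 + 4 * lam0 ^ 2) / (1 - 4 * lam0 ^ 2) := by
    rw [sqrt_eq_iff_eq_sq (by positivity) (div_nonneg (by positivity) (by linarith)), hk]
    field_simp
    ring
  have hintegrand : ∀ y, 4 * lam0 * |cos y| / (4 * lam0 ^ 2 - 1) = k * |cos y| := fun y => by ring
  simp only [hintegrand]
  rw [integral_abs_cos_mul_arctan_mul_abs_cos, hsqrt, hk]
  field_simp
  ring
end

section
/- Let λ₀ be a real number with 0 < λ₀ < 1/2. Then (1/π) ∫₀^π sin(ν)·cos²(ν) · arctan(4λ₀·sin(ν)/(4λ₀² − 1)) dν = −λ₀/2 − (2/3)·λ₀³. -/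
/-
Integrating by parts against `d(-cos³ν/3) = sin ν cos²ν` (the boundary terms vanish because
`sin 0 = sin π = 0`) turns the integral into `(a/3) ∫₀^π cos⁴ν / (1 + a² sin²ν)` with
`a = 4λ₀/(4λ₀² - 1)`. For `r = 4λ₀²` the denominator is `P(2ν)/(1 - r)²` with the Poisson
denominator `P(θ) = 1 - 2r cos θ + r²`, and `cos⁴ν / P(2ν)` is a combination of `1/P(2ν)`, `cos²ν`
and `1`. Since `|r| < 1`, the Poisson kernel `(1 - r²)/P` integrates to `2π` over a period.
-/

open Real intervalIntegral

section

variable {r : ℝ}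

theorem one_sub_mul_cos_pos (hr : |r| < 1) (θ : ℝ) : 0 < 1 - r * cos θ := by
  have : |r * cos θ| ≤ |r| := by
    rw [abs_mul]; exact mul_le_of_le_one_right (abs_nonneg r) (abs_cos_le_one θ)
  linarith [le_abs_self (r * cos θ)]

theorem one_sub_two_mul_cos_add_sq_pos (hr : |r| < 1) (θ : ℝ) :
    0 < 1 - 2 * r * cos θ + r ^ 2 := by
  nlinarith [one_sub_mul_cos_pos hr θ, sin_sq_add_cos_sq θ, sq_nonneg (r * sin θ)]

theorem hasDerivAt_poissonKernel_primitive (hr : |r| < 1) (θ : ℝ) :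
    HasDerivAt (fun θ => θ + 2 * arctan (r * sin θ / (1 - r * cos θ)))
      ((1 - r ^ 2) / (1 - 2 * r * cos θ + r ^ 2)) θ := by
  have hq := (one_sub_mul_cos_pos hr θ).ne'
  have hP := (one_sub_two_mul_cos_add_sq_pos hr θ).ne'
  have hquot : HasDerivAt (fun θ => r * sin θ / (1 - r * cos θ))
      (r * (cos θ - r) / (1 - r * cos θ) ^ 2) θ := by
    refine (((hasDerivAt_sin θ).const_mul r).div
      (((hasDerivAt_cos θ).const_mul r).const_sub 1) hq).congr_deriv ?_
    field_simp
    linear_combination (-r ^ 2) * sin_sq_add_cos_sq θ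
  refine ((hasDerivAt_id' θ).add (hquot.arctan.const_mul 2)).congr_deriv ?_
  have hden : 1 + (r * sin θ / (1 - r * cos θ)) ^ 2
      = (1 - 2 * r * cos θ + r ^ 2) / (1 - r * cos θ) ^ 2 := by
    field_simp
    linear_combination r ^ 2 * sin_sq_add_cos_sq θ
  rw [hden]
  field_simp
  ring

theorem integral_poissonKernel (hr : |r| < 1) :
    ∫ θ in (0 : ℝ)..2 * π, (1 - r ^ 2) / (1 - 2 * r * cos θ + r ^ 2) = 2 * π := by
  rw [integral_eq_sub_of_hasDerivAt (fun θ _ => hasDerivAt_poissonKernel_primitive hr θ)]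
  · simp
  · exact (continuous_const.div (by fun_prop)
      fun θ => (one_sub_two_mul_cos_add_sq_pos hr θ).ne').intervalIntegrable _ _

theorem integral_poissonKernel_comp_two_mul (hr : |r| < 1) :
    ∫ ν in (0 : ℝ)..π, (1 - r ^ 2) / (1 - 2 * r * cos (2 * ν) + r ^ 2) = π := by
  rw [integral_comp_mul_left (fun θ => (1 - r ^ 2) / (1 - 2 * r * cos θ + r ^ 2)) two_ne_zero,
    mul_zero, integral_poissonKernel hr, smul_eq_mul]
  field_simp

theorem integral_cos_pow_four_div (hr0 : r ≠ 0) (hr : |r| < 1) :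
    ∫ ν in (0 : ℝ)..π, cos ν ^ 4 / (1 - 2 * r * cos (2 * ν) + r ^ 2)
      = π * (3 + r) / (8 * (1 - r)) := by
  have hP : ∀ ν, 1 - 2 * r * cos (2 * ν) + r ^ 2 ≠ 0 := fun ν =>
    (one_sub_two_mul_cos_add_sq_pos hr _).ne'
  obtain ⟨hr₁, hr₂⟩ := abs_lt.mp hr
  have h1r : 1 - r ≠ 0 := by linarith
  have h1r2 : 1 - r ^ 2 ≠ 0 := by nlinarith
  have hsplit : ∀ ν, cos ν ^ 4 / (1 - 2 * r * cos (2 * ν) + r ^ 2)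
      = (1 + r) ^ 4 / (16 * r ^ 2 * (1 - r ^ 2)) * ((1 - r ^ 2) / (1 - 2 * r * cos (2 * ν) + r ^ 2))
        - (cos ν ^ 2 / (4 * r) + (1 + r) ^ 2 / (16 * r ^ 2)) := by
    intro ν
    have hcos : 1 - 2 * r * cos (2 * ν) + r ^ 2 = (1 + r) ^ 2 - 4 * r * cos ν ^ 2 := by
      rw [cos_two_mul]; ring
    have hD := hP ν
    rw [hcos] at hD ⊢
    -- keep the denominator atomic, otherwise `field_simp` cannot see that it is nonzero
    generalize hDdef : (1 + r) ^ 2 - 4 * r * cos ν ^ 2 = D at hD ⊢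
    field_simp
    subst hDdef
    ring
  have hKint : IntervalIntegrable (fun ν => (1 - r ^ 2) / (1 - 2 * r * cos (2 * ν) + r ^ 2))
      MeasureTheory.volume 0 π :=
    (continuous_const.div (by fun_prop) hP).intervalIntegrable _ _
  simp_rw [hsplit]
  rw [integral_sub (hKint.const_mul _) (Continuous.intervalIntegrable (by fun_prop) _ _),
    integral_const_mul, integral_poissonKernel_comp_two_mul hr,
    integral_add (Continuous.intervalIntegrable (by fun_prop) _ _) intervalIntegrable_const,
    integral_div, integral_cos_sq, integral_const]
  simp only [cos_pi, sin_pi, mul_zero, cos_zero, sin_zero, sub_self, zero_add, sub_zero, smul_eq_mul]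
  field_simp
  ring

end

theorem integral_sin_mul_cos_sq_mul_arctan (a : ℝ) :
    ∫ ν in (0 : ℝ)..π, sin ν * cos ν ^ 2 * arctan (a * sin ν)
      = a / 3 * ∫ ν in (0 : ℝ)..π, cos ν ^ 4 / (1 + (a * sin ν) ^ 2) := by
  have hu : ∀ ν, HasDerivAt (fun ν => arctan (a * sin ν))
      (1 / (1 + (a * sin ν) ^ 2) * (a * cos ν)) ν := fun ν =>
    ((hasDerivAt_sin ν).const_mul a).arctan
  have hv : ∀ ν, HasDerivAt (fun ν => -(cos ν ^ 3 / 3)) (sin ν * cos ν ^ 2) ν := fun ν =>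
    (((hasDerivAt_cos ν).pow 3).div_const 3).neg.congr_deriv (by ring)
  have hparts := integral_mul_deriv_eq_deriv_mul (a := 0) (b := π) (fun ν _ => hu ν)
    (fun ν _ => hv ν) (Continuous.intervalIntegrable (by fun_prop (disch := intro; positivity)) _ _)
    (Continuous.intervalIntegrable (by fun_prop) _ _)
  simp only [sin_zero, sin_pi, mul_zero, arctan_zero, zero_mul, sub_zero, zero_sub] at hparts
  rw [← integral_const_mul]
  calc _ = ∫ ν in (0 : ℝ)..π, arctan (a * sin ν) * (sin ν * cos ν ^ 2) := by
        simp only [mul_comm (arctan _)]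
    _ = _ := by
        rw [hparts, ← integral_neg]
        congr 1
        ext ν
        field_simp

theorem expectation_sin_cos_sq_arctan (lam0 : ℝ) (h0 : 0 < lam0) (h1 : lam0 < 1 / 2) :
    (1 / π) * ∫ ν in (0 : ℝ)..π,
        Real.sin ν * Real.cos ν ^ 2 *
          Real.arctan (4 * lam0 * Real.sin ν / (4 * lam0 ^ 2 - 1))
      = -lam0 / 2 - (2 / 3) * lam0 ^ 3 := by
  have hr : |4 * lam0 ^ 2| < 1 := by
    rw [abs_of_pos (by positivity)]
    nlinarith
  have hd : 4 * lam0 ^ 2 - 1 ≠ 0 := by nlinarith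
  have hd' : 1 - 4 * lam0 ^ 2 ≠ 0 := by nlinarith
  have hdenom : ∀ ν, 1 + (4 * lam0 / (4 * lam0 ^ 2 - 1) * sin ν) ^ 2
      = (1 - 2 * (4 * lam0 ^ 2) * cos (2 * ν) + (4 * lam0 ^ 2) ^ 2) / (4 * lam0 ^ 2 - 1) ^ 2 := by
    intro ν
    rw [cos_two_mul]
    field_simp
    linear_combination 16 * lam0 ^ 2 * sin_sq_add_cos_sq ν
  simp_rw [mul_div_right_comm (4 * lam0) (sin _), integral_sin_mul_cos_sq_mul_arctan, hdenom,
    div_div_eq_mul_div, mul_div_right_comm _ ((4 * lam0 ^ 2 - 1) ^ 2), integral_mul_const,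
    integral_cos_pow_four_div (by positivity) hr]
  field_simp
  ring
end

section
/- Let λ₀, n₁, n₂ be real numbers with 0 < λ₀ < 1/2, n₁ > 0, |n₂| < 1, and n₁² + n₂² = 1. Then arctan(1/(2λ₀n₁) + n₂/n₁) + arctan(1/(2λ₀n₁) − n₂/n₁) = π + arctan(4λ₀n₁/(4λ₀² − 1)). -/
/-!
Write both arguments over the common denominator `c = 2 λ₀ n₁`: they are `(1 ± 2 λ₀ n₂) / c`.
Their product exceeds `1` precisely because `4 λ₀² (n₁² + n₂²) = 4 λ₀² < 1`, so the arctangent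
addition formula picks up a `π`, and the tangent of the sum simplifies to `4 λ₀ n₁ / (4 λ₀² - 1)`.
-/

open Real

theorem arctan_div_add_arctan_div_eq_pi_add {p q c : ℝ} (hc : 0 < c) (hp : 0 < p)
    (hpq : c ^ 2 < p * q) :
    arctan (p / c) + arctan (q / c) = π + arctan (c * (p + q) / (c ^ 2 - p * q)) := by
  have hprod : 1 < p / c * (q / c) := by
    rw [div_mul_div_comm, ← sq, one_lt_div (by positivity)]
    exact hpq
  have hden : c ^ 2 - p * q ≠ 0 := by linarith
  rw [arctan_add_eq_add_pi hprod (by positivity), add_comm]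
  congr 2
  field_simp

theorem arctan_sum_identity_general (lam0 n1 n2 : ℝ)
    (h0 : 0 < lam0) (h1 : lam0 < 1 / 2) (hn1 : 0 < n1)
    (hnorm : n1 ^ 2 + n2 ^ 2 = 1) :
    Real.arctan (1 / (2 * lam0 * n1) + n2 / n1)
        + Real.arctan (1 / (2 * lam0 * n1) - n2 / n1)
      = π + Real.arctan (4 * lam0 * n1 / (4 * lam0 ^ 2 - 1)) := by
  have hc : 0 < 2 * lam0 * n1 := by positivity
  have hp : 0 < 1 + 2 * lam0 * n2 := by
    have hsq : (2 * lam0 * n2) ^ 2 < 1 := by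
      nlinarith [mul_nonneg (sq_nonneg lam0) (sq_nonneg n1)]
    linarith [(abs_lt.mp (sq_lt_one_iff_abs_lt_one _ |>.mp hsq)).1]
  have hden : (2 * lam0 * n1) ^ 2 - (1 + 2 * lam0 * n2) * (1 - 2 * lam0 * n2)
      = 4 * lam0 ^ 2 - 1 := by linear_combination (4 * lam0 ^ 2) * hnorm
  have hnum : 2 * lam0 * n1 * ((1 + 2 * lam0 * n2) + (1 - 2 * lam0 * n2)) = 4 * lam0 * n1 := by
    ring
  have hA : 1 / (2 * lam0 * n1) + n2 / n1 = (1 + 2 * lam0 * n2) / (2 * lam0 * n1) := by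
    field_simp
  have hB : 1 / (2 * lam0 * n1) - n2 / n1 = (1 - 2 * lam0 * n2) / (2 * lam0 * n1) := by
    field_simp
  rw [hA, hB, arctan_div_add_arctan_div_eq_pi_add hc hp (by nlinarith), hnum, hden]

theorem arctan_sum_identity (lam0 n1 n2 : ℝ)
    (h0 : 0 < lam0) (h1 : lam0 < 1 / 2) (hn1 : 0 < n1) (hn2 : |n2| < 1)
    (hnorm : n1 ^ 2 + n2 ^ 2 = 1) :
    Real.arctan (1 / (2 * lam0 * n1) + n2 / n1)
        + Real.arctan (1 / (2 * lam0 * n1) - n2 / n1)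
      = π + Real.arctan (4 * lam0 * n1 / (4 * lam0 ^ 2 - 1)) :=
  arctan_sum_identity_general lam0 n1 n2 h0 h1 hn1 hnorm
end

section
/- Let λ₀, n₁, n₂ be real numbers with λ₀ > 0, n₁ > 0, 0 ≤ n₂ < 1, and n₁² + n₂² = 1. Then (n₁²/π²) ∫₀^{1/2} (1 + π²λ²/3)/(λ² + 2λ₀n₂λ + λ₀²) dλ = n₁²/6 + n₁·(1/(λ₀π²) + (λ₀/3)·(2n₂² − 1))·(arctan(1/(2λ₀n₁) + n₂/n₁) − arctan(n₂/n₁)) − (λ₀n₁²n₂/3)·log(1 + n₂/λ₀ + 1/(4λ₀²)). -/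
open Real

/-!
Since `n₁² + n₂² = 1`, the denominator is `(λ + λ₀n₂)² + (λ₀n₁)²`. Over such a denominator,
`p + cλ²` splits as `c` times the denominator, plus a multiple of its derivative, plus
a constant; these integrate to a linear term, a logarithm and an arctangent respectively.
-/

theorem hasDerivAt_antideriv_add_mul_sq_div_sq_add_sq (p c : ℝ) {a : ℝ} (ha : a ≠ 0) (b x : ℝ) :
    HasDerivAt
      (fun x => c * x - c * b * log ((x + b) ^ 2 + a ^ 2)
        + (p + c * (b ^ 2 - a ^ 2)) / a * arctan ((x + b) / a))
      ((p + c * x ^ 2) / ((x + b) ^ 2 + a ^ 2)) x := by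
  have hD : (x + b) ^ 2 + a ^ 2 ≠ 0 := by positivity
  have hlin : HasDerivAt (fun x => (x + b) / a) (1 / a) x :=
    ((hasDerivAt_id x).add_const b).div_const a
  have hsq : HasDerivAt (fun x => (x + b) ^ 2 + a ^ 2) (2 * (x + b)) x := by
    simpa using (((hasDerivAt_id x).add_const b).pow 2).add_const (a ^ 2)
  refine ((((hasDerivAt_id x).const_mul c).sub ((hsq.log hD).const_mul (c * b))).add
    (hlin.arctan.const_mul ((p + c * (b ^ 2 - a ^ 2)) / a))).congr_deriv ?_
  field_simp
  ring

theorem integral_add_mul_sq_div_sq_add_sq (p c : ℝ) {a : ℝ} (ha : a ≠ 0) (b u v : ℝ) :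
    ∫ x in u..v, (p + c * x ^ 2) / ((x + b) ^ 2 + a ^ 2)
      = c * (v - u) - c * b * (log ((v + b) ^ 2 + a ^ 2) - log ((u + b) ^ 2 + a ^ 2))
        + (p + c * (b ^ 2 - a ^ 2)) / a * (arctan ((v + b) / a) - arctan ((u + b) / a)) := by
  have hcont : Continuous fun x => (p + c * x ^ 2) / ((x + b) ^ 2 + a ^ 2) := by
    fun_prop (disch := intro x; positivity)
  rw [intervalIntegral.integral_eq_sub_of_hasDerivAt
    (fun x _ => hasDerivAt_antideriv_add_mul_sq_div_sq_add_sq p c ha b x)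
    (hcont.intervalIntegrable u v)]
  ring

theorem integral_G_plus_general (lam0 n1 n2 : ℝ)
    (h0 : 0 < lam0) (hn1 : 0 < n1)
    (hnorm : n1 ^ 2 + n2 ^ 2 = 1) :
    (n1 ^ 2 / π ^ 2) *
        ∫ lam in (0 : ℝ)..(1 / 2),
          (1 + π ^ 2 * lam ^ 2 / 3) / (lam ^ 2 + 2 * lam0 * n2 * lam + lam0 ^ 2)
      = n1 ^ 2 / 6
        + n1 * (1 / (lam0 * π ^ 2) + (lam0 / 3) * (2 * n2 ^ 2 - 1)) *
            (Real.arctan (1 / (2 * lam0 * n1) + n2 / n1) - Real.arctan (n2 / n1))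
        - (lam0 * n1 ^ 2 * n2 / 3) *
            Real.log (1 + n2 / lam0 + 1 / (4 * lam0 ^ 2)) := by
  have ha : lam0 * n1 ≠ 0 := by positivity
  have hintegrand (lam : ℝ) :
      (1 + π ^ 2 * lam ^ 2 / 3) / (lam ^ 2 + 2 * lam0 * n2 * lam + lam0 ^ 2)
        = (1 + π ^ 2 / 3 * lam ^ 2) / ((lam + lam0 * n2) ^ 2 + (lam0 * n1) ^ 2) := by
    congr 1
    · ring
    · linear_combination (-lam0 ^ 2) * hnorm
  have hlog :
      log ((1 / 2 + lam0 * n2) ^ 2 + (lam0 * n1) ^ 2) - log ((0 + lam0 * n2) ^ 2 + (lam0 * n1) ^ 2)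
        = log (1 + n2 / lam0 + 1 / (4 * lam0 ^ 2)) := by
    rw [← log_div (by positivity) (by positivity)]
    congr 1
    field_simp
    linear_combination (-lam0 ^ 2 * 4 - 16 * lam0 ^ 3 * n2) * hnorm
  have hend : (1 / 2 + lam0 * n2) / (lam0 * n1) = 1 / (2 * lam0 * n1) + n2 / n1 := by
    field_simp
  have hstart : (0 + lam0 * n2) / (lam0 * n1) = n2 / n1 := by
    rw [zero_add, mul_div_mul_left _ _ h0.ne']
  simp_rw [hintegrand]
  rw [integral_add_mul_sq_div_sq_add_sq 1 (π ^ 2 / 3) ha, hlog, hend, hstart]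
  set T := arctan (1 / (2 * lam0 * n1) + n2 / n1) - arctan (n2 / n1)
  field_simp
  linear_combination (-12 * π ^ 2 * lam0 ^ 2 * T) * hnorm

theorem integral_G_plus (lam0 n1 n2 : ℝ)
    (h0 : 0 < lam0) (hn1 : 0 < n1) (hn2 : 0 ≤ n2) (hn2' : n2 < 1)
    (hnorm : n1 ^ 2 + n2 ^ 2 = 1) :
    (n1 ^ 2 / π ^ 2) *
        ∫ lam in (0 : ℝ)..(1 / 2),
          (1 + π ^ 2 * lam ^ 2 / 3) / (lam ^ 2 + 2 * lam0 * n2 * lam + lam0 ^ 2)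
      = n1 ^ 2 / 6
        + n1 * (1 / (lam0 * π ^ 2) + (lam0 / 3) * (2 * n2 ^ 2 - 1)) *
            (Real.arctan (1 / (2 * lam0 * n1) + n2 / n1) - Real.arctan (n2 / n1))
        - (lam0 * n1 ^ 2 * n2 / 3) *
            Real.log (1 + n2 / lam0 + 1 / (4 * lam0 ^ 2)) :=
  integral_G_plus_general lam0 n1 n2 h0 hn1 hnorm
end

section
/- Let λ₀, n₁, n₂ be real numbers with λ₀ > 0, n₁ > 0, 0 ≤ n₂ < 1, and n₁² + n₂² = 1. Then (n₁²/π²) ∫₀^{1/2} (1 + π²λ²/3)/(λ² − 2λ₀n₂λ + λ₀²) dλ = n₁²/6 + n₁·(1/(λ₀π²) + (λ₀/3)·(2n₂² − 1))·(arctan(1/(2λ₀n₁) − n₂/n₁) + arctan(n₂/n₁)) + (λ₀n₁²n₂/3)·log(1 − n₂/λ₀ + 1/(4λ₀²)). -/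
/-!
Completing the square, the denominator is `(λ - a)² + b²` with `a = λ₀ n₂`, `b = λ₀ n₁`
(using `n₁² + n₂² = 1`). Writing `λ² = ((λ - a)² + b²) + 2a (λ - a) + (a² - b²)` splits the
integrand `(c₀ + c₂ λ²) / ((λ - a)² + b²)` into a constant, a logarithmic derivative and an
arctangent derivative, which gives an explicit primitive.
-/

open Real

theorem hasDerivAt_quadratic_div_sq_add_sq {a b : ℝ} (hb : b ≠ 0) (c₀ c₂ x : ℝ) :
    HasDerivAt
      (fun x => c₂ * x + a * c₂ * log ((x - a) ^ 2 + b ^ 2)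
        + (c₀ + c₂ * (a ^ 2 - b ^ 2)) / b * arctan ((x - a) / b))
      ((c₀ + c₂ * x ^ 2) / ((x - a) ^ 2 + b ^ 2)) x := by
  have hQ : (x - a) ^ 2 + b ^ 2 ≠ 0 := by positivity
  have hsq : HasDerivAt (fun x => (x - a) ^ 2 + b ^ 2) (2 * (x - a)) x := by
    simpa using (((hasDerivAt_id x).sub_const a).pow 2).add_const (b ^ 2)
  have hratio : HasDerivAt (fun x => (x - a) / b) (1 / b) x := by
    simpa using ((hasDerivAt_id x).sub_const a).div_const b
  refine ((((hasDerivAt_id x).const_mul c₂).add ((hsq.log hQ).const_mul (a * c₂))).add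
    (((hasDerivAt_arctan _).comp x hratio).const_mul _)).congr_deriv ?_
  field_simp
  ring

theorem integral_quadratic_div_sq_add_sq {a b : ℝ} (hb : b ≠ 0) (c₀ c₂ u v : ℝ) :
    ∫ x in u..v, (c₀ + c₂ * x ^ 2) / ((x - a) ^ 2 + b ^ 2)
      = c₂ * (v - u) + a * c₂ * log (((v - a) ^ 2 + b ^ 2) / ((u - a) ^ 2 + b ^ 2))
        + (c₀ + c₂ * (a ^ 2 - b ^ 2)) / b * (arctan ((v - a) / b) - arctan ((u - a) / b)) := by
  have hcont : Continuous fun x => (c₀ + c₂ * x ^ 2) / ((x - a) ^ 2 + b ^ 2) :=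
    Continuous.div (by fun_prop) (by fun_prop) fun x => by positivity
  rw [intervalIntegral.integral_eq_sub_of_hasDerivAt
    (fun x _ => hasDerivAt_quadratic_div_sq_add_sq hb c₀ c₂ x) (hcont.intervalIntegrable u v),
    log_div (by positivity) (by positivity)]
  ring

theorem integral_G_minus_general (lam0 n1 n2 : ℝ)
    (h0 : 0 < lam0) (hn1 : 0 < n1)
    (hnorm : n1 ^ 2 + n2 ^ 2 = 1) :
    (n1 ^ 2 / π ^ 2) *
        ∫ lam in (0 : ℝ)..(1 / 2),
          (1 + π ^ 2 * lam ^ 2 / 3) / (lam ^ 2 - 2 * lam0 * n2 * lam + lam0 ^ 2)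
      = n1 ^ 2 / 6
        + n1 * (1 / (lam0 * π ^ 2) + (lam0 / 3) * (2 * n2 ^ 2 - 1)) *
            (Real.arctan (1 / (2 * lam0 * n1) - n2 / n1) + Real.arctan (n2 / n1))
        + (lam0 * n1 ^ 2 * n2 / 3) *
            Real.log (1 - n2 / lam0 + 1 / (4 * lam0 ^ 2)) := by
  have hb : lam0 * n1 ≠ 0 := (mul_pos h0 hn1).ne'
  have hintegrand : ∀ lam : ℝ,
      (1 + π ^ 2 * lam ^ 2 / 3) / (lam ^ 2 - 2 * lam0 * n2 * lam + lam0 ^ 2)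
        = (1 + π ^ 2 / 3 * lam ^ 2) / ((lam - lam0 * n2) ^ 2 + (lam0 * n1) ^ 2) := fun lam => by
    rw [show lam ^ 2 - 2 * lam0 * n2 * lam + lam0 ^ 2 = (lam - lam0 * n2) ^ 2 + (lam0 * n1) ^ 2 by
      linear_combination (-lam0 ^ 2) * hnorm]
    ring
  have harctan_end : (1 / 2 - lam0 * n2) / (lam0 * n1) = 1 / (2 * lam0 * n1) - n2 / n1 := by
    field_simp
  have harctan_start : (0 - lam0 * n2) / (lam0 * n1) = -(n2 / n1) := by
    rw [zero_sub, neg_div, mul_div_mul_left _ _ h0.ne']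
  have hlog_arg :
      ((1 / 2 - lam0 * n2) ^ 2 + (lam0 * n1) ^ 2) / ((0 - lam0 * n2) ^ 2 + (lam0 * n1) ^ 2)
        = 1 - n2 / lam0 + 1 / (4 * lam0 ^ 2) := by
    rw [show (0 - lam0 * n2) ^ 2 + (lam0 * n1) ^ 2 = lam0 ^ 2 by
      linear_combination lam0 ^ 2 * hnorm]
    field_simp
    linear_combination 16 * lam0 ^ 2 * hnorm
  simp_rw [hintegrand]
  rw [integral_quadratic_div_sq_add_sq hb, harctan_end, harctan_start, hlog_arg, arctan_neg]
  generalize arctan (1 / (2 * lam0 * n1) - n2 / n1) = s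
  generalize arctan (n2 / n1) = t
  field_simp
  linear_combination (-12 * π ^ 2 * lam0 ^ 2 * (s + t)) * hnorm

theorem integral_G_minus (lam0 n1 n2 : ℝ)
    (h0 : 0 < lam0) (hn1 : 0 < n1) (hn2 : 0 ≤ n2) (hn2' : n2 < 1)
    (hnorm : n1 ^ 2 + n2 ^ 2 = 1) :
    (n1 ^ 2 / π ^ 2) *
        ∫ lam in (0 : ℝ)..(1 / 2),
          (1 + π ^ 2 * lam ^ 2 / 3) / (lam ^ 2 - 2 * lam0 * n2 * lam + lam0 ^ 2)
      = n1 ^ 2 / 6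
        + n1 * (1 / (lam0 * π ^ 2) + (lam0 / 3) * (2 * n2 ^ 2 - 1)) *
            (Real.arctan (1 / (2 * lam0 * n1) - n2 / n1) + Real.arctan (n2 / n1))
        + (lam0 * n1 ^ 2 * n2 / 3) *
            Real.log (1 - n2 / lam0 + 1 / (4 * lam0 ^ 2)) :=
  integral_G_minus_general lam0 n1 n2 h0 hn1 hnorm
end

section
/- Let λ₀ be a real number with 0 < λ₀ < 1/2, and for real n₁, n₂ with n₁² + n₂² = 1 define G(λ₀, n₁, n₂) = n₁²/3 + (λ₀n₁²n₂/3)·log((1 + 4λ₀² − 4λ₀n₂)/(1 + 4λ₀² + 4λ₀n₂)) + |n₁|·(1/(λ₀π²) + (λ₀/3)·(2n₂² − 1))·(arctan(4λ₀|n₁|/(4λ₀² − 1)) + π). Then (1/π) ∫₀^π [G(λ₀, cos ν, sin ν) + G(λ₀, sin ν, cos ν)] dν = 4/(π²λ₀) − (4/9)·λ₀ + 1/3 − 4/π². -/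
/-!
The substitution `ν ↦ ν + π / 2` together with `G(λ, -n₁, n₂) = G(λ, n₁, n₂) = G(λ, n₁, -n₂)`
turns the integrand into two copies of the `π`-periodic function `g ν = G(λ, sin ν, cos ν)`, so
the left-hand side is `(2 / π) ∫₀^π g`. On `[0, π]` we integrate by parts twice: the logarithm
against `sin² ν cos ν` and the arctangent against `sin ν (p + q cos² ν)`. This leaves rational
functions of `sin ν, cos ν` with denominator
`(1 + 4λ² - 4λ cos ν) (1 + 4λ² + 4λ cos ν) = (1 + 4λ²)² sin² ν + (1 - 4λ²)² cos² ν`;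
only the arctangent leaves boundary terms, and what remains are the moments
`∫₀^π cos^{2k} ν / (a² sin² ν + b² cos² ν) dν`, all elementary consequences of
`∫₀^π dν / (a² sin² ν + b² cos² ν) = π / (a b)`.
-/

open Real

/-- The function `G(λ₀, n₁, n₂)` from the analysis of the finite-sample error of the
monogenic unidirectionality measure for a random plane wave. -/
noncomputable def planeWaveG (lam0 n1 n2 : ℝ) : ℝ :=
  n1 ^ 2 / 3
    + (lam0 * n1 ^ 2 * n2 / 3) *
        Real.log ((1 + 4 * lam0 ^ 2 - 4 * lam0 * n2) / (1 + 4 * lam0 ^ 2 + 4 * lam0 * n2))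
    + |n1| * (1 / (lam0 * π ^ 2) + (lam0 / 3) * (2 * n2 ^ 2 - 1)) *
        (Real.arctan (4 * lam0 * |n1| / (4 * lam0 ^ 2 - 1)) + π)

open intervalIntegral
open MeasureTheory (volume)

noncomputable def sinCosQuad (a b x : ℝ) : ℝ := a ^ 2 * sin x ^ 2 + b ^ 2 * cos x ^ 2

section sinCosQuad

variable {a b : ℝ}

lemma mul_sin_sq_add_mul_cos_sq_pos (ha : 0 < a) (hb : 0 < b) (x : ℝ) :
    0 < a * sin x ^ 2 + b * cos x ^ 2 := by
  nlinarith [sin_sq_add_cos_sq x, min_le_left a b, min_le_right a b, lt_min ha hb,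
    sq_nonneg (sin x), sq_nonneg (cos x)]

lemma sinCosQuad_pos (ha : a ≠ 0) (hb : b ≠ 0) (x : ℝ) : 0 < sinCosQuad a b x :=
  mul_sin_sq_add_mul_cos_sq_pos (by positivity) (by positivity) x

lemma continuous_sinCosQuad : Continuous (sinCosQuad a b) := by
  unfold sinCosQuad; fun_prop

lemma intervalIntegrable_div_sinCosQuad {f : ℝ → ℝ} (hf : Continuous f) (ha : a ≠ 0) (hb : b ≠ 0)
    (s t : ℝ) : IntervalIntegrable (fun x => f x / sinCosQuad a b x) volume s t :=
  (hf.div continuous_sinCosQuad fun x => (sinCosQuad_pos ha hb x).ne').intervalIntegrable s t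

theorem integral_one_div_sinCosQuad (ha : 0 < a) (hb : 0 < b) :
    ∫ x in (0 : ℝ)..π, 1 / sinCosQuad a b x = π / (a * b) := by
  have hD := sinCosQuad_pos ha.ne' hb.ne'
  have hM := mul_sin_sq_add_mul_cos_sq_pos ha hb
  -- `x + arctan (…)` is the continuous branch of `arctan ((a / b) tan x)`
  have hderiv : ∀ x, HasDerivAt
      (fun x => (x + arctan ((a - b) * sin x * cos x / (a * sin x ^ 2 + b * cos x ^ 2))) / (a * b))
      (1 / sinCosQuad a b x) x := fun x => by
    have hN := ((hasDerivAt_sin x).const_mul (a - b)).mul (hasDerivAt_cos x)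
    have hM' :=
      (((hasDerivAt_sin x).pow 2).const_mul a).add (((hasDerivAt_cos x).pow 2).const_mul b)
    refine (((hasDerivAt_id x).add (hN.div hM' (hM x).ne').arctan).div_const (a * b)).congr_deriv ?_
    have := hM x
    have : 0 < a ^ 2 * sin x ^ 2 + b ^ 2 * cos x ^ 2 := hD x
    simp only [Pi.mul_apply, Pi.div_apply, Pi.add_apply, Pi.pow_apply, sinCosQuad]
    field_simp
    linear_combination (a * b * (b ^ 2 * cos x ^ 2 + a ^ 2 * sin x ^ 2) * (sin x ^ 2 + cos x ^ 2))
      * sin_sq_add_cos_sq x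
  rw [integral_eq_sub_of_hasDerivAt (fun x _ => hderiv x)
    (intervalIntegrable_div_sinCosQuad continuous_const ha.ne' hb.ne' _ _)]
  simp

lemma sinCosQuad_eq_sub_mul_cos_sq (a b x : ℝ) :
    sinCosQuad a b x = a ^ 2 - (a ^ 2 - b ^ 2) * cos x ^ 2 := by
  rw [sinCosQuad, sin_sq]; ring

theorem integral_cos_sq_div_sinCosQuad (ha : 0 < a) (hb : 0 < b) (hab : a ≠ b) :
    ∫ x in (0 : ℝ)..π, cos x ^ 2 / sinCosQuad a b x = π / (b * (a + b)) := by
  have hD := sinCosQuad_pos ha.ne' hb.ne'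
  have hab' : a ^ 2 - b ^ 2 ≠ 0 := by
    rw [sq_sub_sq]; exact mul_ne_zero (by positivity) (sub_ne_zero.2 hab)
  have hsplit : ∀ x, cos x ^ 2 / sinCosQuad a b x
      = (a ^ 2 * (1 / sinCosQuad a b x) - 1) / (a ^ 2 - b ^ 2) := fun x => by
    have := (hD x).ne'
    field_simp
    rw [sinCosQuad_eq_sub_mul_cos_sq]; ring
  simp_rw [hsplit]
  rw [integral_div, integral_sub, integral_const_mul,
    integral_one_div_sinCosQuad ha hb]
  · simp only [integral_const, sub_zero, smul_eq_mul, mul_one]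
    field_simp
    ring
  · exact (intervalIntegrable_div_sinCosQuad continuous_const ha.ne' hb.ne' _ _).const_mul _
  · exact intervalIntegrable_const

theorem integral_cos_pow_four_div_sinCosQuad (ha : 0 < a) (hb : 0 < b) (hab : a ≠ b) :
    ∫ x in (0 : ℝ)..π, cos x ^ 4 / sinCosQuad a b x = π * (2 * a + b) / (2 * b * (a + b) ^ 2) := by
  have hD := sinCosQuad_pos ha.ne' hb.ne'
  have hab' : a ^ 2 - b ^ 2 ≠ 0 := by
    rw [sq_sub_sq]; exact mul_ne_zero (by positivity) (sub_ne_zero.2 hab)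
  have hsplit : ∀ x, cos x ^ 4 / sinCosQuad a b x
      = (a ^ 2 * (cos x ^ 2 / sinCosQuad a b x) - cos x ^ 2) / (a ^ 2 - b ^ 2) := fun x => by
    have := (hD x).ne'
    field_simp
    rw [sinCosQuad_eq_sub_mul_cos_sq]; ring
  simp_rw [hsplit]
  rw [integral_div, integral_sub, integral_const_mul,
    integral_cos_sq_div_sinCosQuad ha hb hab, integral_cos_sq]
  · simp only [cos_pi, sin_pi, mul_zero, cos_zero, sin_zero, sub_self, zero_add, sub_zero]
    have : b - a ≠ 0 := sub_ne_zero.2 hab.symm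
    field_simp
    ring
  · exact (intervalIntegrable_div_sinCosQuad (by fun_prop) ha.ne' hb.ne' _ _).const_mul _
  · exact (by fun_prop : Continuous fun x => cos x ^ 2).intervalIntegrable _ _

theorem integral_sin_pow_four_div_sinCosQuad (ha : 0 < a) (hb : 0 < b) (hab : a ≠ b) :
    ∫ x in (0 : ℝ)..π, sin x ^ 4 / sinCosQuad a b x = π * (a + 2 * b) / (2 * a * (a + b) ^ 2) := by
  have hsplit : ∀ x, sin x ^ 4 / sinCosQuad a b x = 1 / sinCosQuad a b x
      - 2 * (cos x ^ 2 / sinCosQuad a b x) + cos x ^ 4 / sinCosQuad a b x := fun x => by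
    have := (sinCosQuad_pos ha.ne' hb.ne' x).ne'
    rw [show sin x ^ 4 = (sin x ^ 2) ^ 2 by ring, sin_sq]
    field_simp
    ring
  have h0 := intervalIntegrable_div_sinCosQuad (f := fun _ => 1) continuous_const ha.ne' hb.ne' 0 π
  have h2 := (intervalIntegrable_div_sinCosQuad (f := fun x => cos x ^ 2) (by fun_prop)
    ha.ne' hb.ne' 0 π).const_mul 2
  have h4 := intervalIntegrable_div_sinCosQuad (f := fun x => cos x ^ 4) (by fun_prop)
    ha.ne' hb.ne' 0 π
  simp_rw [hsplit]
  rw [integral_add (h0.sub h2) h4, integral_sub h0 h2, integral_const_mul,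
    integral_one_div_sinCosQuad ha hb, integral_cos_sq_div_sinCosQuad ha hb hab,
    integral_cos_pow_four_div_sinCosQuad ha hb hab]
  field_simp
  ring

end sinCosQuad

namespace PlaneWave

variable {l : ℝ}

lemma sinCosQuad_eq_mul (l x : ℝ) :
    sinCosQuad (1 + 4 * l ^ 2) (1 - 4 * l ^ 2) x
      = (1 + 4 * l ^ 2 - 4 * l * cos x) * (1 + 4 * l ^ 2 + 4 * l * cos x) := by
  rw [sinCosQuad, sin_sq]; ring

lemma logArgs_pos (hl : 4 * l ^ 2 ≠ 1) (x : ℝ) :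
    0 < 1 + 4 * l ^ 2 - 4 * l * cos x ∧ 0 < 1 + 4 * l ^ 2 + 4 * l * cos x := by
  have hprod := sinCosQuad_pos (a := 1 + 4 * l ^ 2) (by positivity) (sub_ne_zero.2 hl.symm) x
  rw [sinCosQuad_eq_mul] at hprod
  rcases pos_and_pos_or_neg_and_neg_of_mul_pos hprod with h | h
  · exact h
  · nlinarith [h.1, h.2, sq_nonneg l]

lemma hasDerivAt_log_sub_log (hl : 4 * l ^ 2 ≠ 1) (x : ℝ) :
    HasDerivAt (fun x => log (1 + 4 * l ^ 2 - 4 * l * cos x) - log (1 + 4 * l ^ 2 + 4 * l * cos x))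
      (8 * l * (1 + 4 * l ^ 2) * sin x / sinCosQuad (1 + 4 * l ^ 2) (1 - 4 * l ^ 2) x) x := by
  obtain ⟨hA, hB⟩ := logArgs_pos hl x
  have hlogA := (((hasDerivAt_cos x).const_mul (4 * l)).const_sub (1 + 4 * l ^ 2)).log hA.ne'
  have hlogB := (((hasDerivAt_cos x).const_mul (4 * l)).const_add (1 + 4 * l ^ 2)).log hB.ne'
  refine (hlogA.sub hlogB).congr_deriv ?_
  rw [sinCosQuad_eq_mul]
  field_simp
  ring

lemma hasDerivAt_arctan_add_pi (hl : 4 * l ^ 2 ≠ 1) (x : ℝ) :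
    HasDerivAt (fun x => arctan (4 * l * sin x / (4 * l ^ 2 - 1)) + π)
      (-(4 * l * (1 - 4 * l ^ 2) * cos x) / sinCosQuad (1 + 4 * l ^ 2) (1 - 4 * l ^ 2) x) x := by
  have hD := (sinCosQuad_pos (a := 1 + 4 * l ^ 2) (by positivity) (sub_ne_zero.2 hl.symm) x).ne'
  have hl' : 4 * l ^ 2 - 1 ≠ 0 := sub_ne_zero.2 hl
  have hD' : sinCosQuad (1 + 4 * l ^ 2) (1 - 4 * l ^ 2) x
      = (4 * l ^ 2 - 1) ^ 2 * (1 + (4 * l * sin x / (4 * l ^ 2 - 1)) ^ 2) := by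
    rw [sinCosQuad, cos_sq']
    field_simp
    ring
  refine ((((hasDerivAt_sin x).const_mul (4 * l)).div_const (4 * l ^ 2 - 1)).arctan.add_const π)
    |>.congr_deriv ?_
  rw [hD'] at hD ⊢
  field_simp
  ring

theorem integral_log_sub_log_mul_sin_sq_mul_cos (hl : 4 * l ^ 2 ≠ 1) :
    ∫ x in (0 : ℝ)..π,
        (log (1 + 4 * l ^ 2 - 4 * l * cos x) - log (1 + 4 * l ^ 2 + 4 * l * cos x))
          * (sin x ^ 2 * cos x)
      = -(8 * l * (1 + 4 * l ^ 2) / 3)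
          * ∫ x in (0 : ℝ)..π, sin x ^ 4 / sinCosQuad (1 + 4 * l ^ 2) (1 - 4 * l ^ 2) x := by
  have hv : ∀ x, HasDerivAt (fun x => sin x ^ 3 / 3) (sin x ^ 2 * cos x) x := fun x => by
    refine (((hasDerivAt_sin x).pow 3).div_const 3).congr_deriv ?_
    ring
  rw [integral_mul_deriv_eq_deriv_mul (fun x _ => hasDerivAt_log_sub_log hl x) (fun x _ => hv x)
    ?_ ((by fun_prop : Continuous fun x => sin x ^ 2 * cos x).intervalIntegrable _ _)]
  · have hu'v : ∀ x, 8 * l * (1 + 4 * l ^ 2) * sin x / sinCosQuad (1 + 4 * l ^ 2) (1 - 4 * l ^ 2) x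
        * (sin x ^ 3 / 3) = 8 * l * (1 + 4 * l ^ 2) / 3
          * (sin x ^ 4 / sinCosQuad (1 + 4 * l ^ 2) (1 - 4 * l ^ 2) x) := fun x => by ring
    simp only [hu'v, integral_const_mul, sin_pi, sin_zero]
    ring
  · exact intervalIntegrable_div_sinCosQuad (by fun_prop) (by positivity)
      (sub_ne_zero.2 hl.symm) _ _

theorem integral_arctan_add_pi_mul_sin_mul (hl : 4 * l ^ 2 ≠ 1) (p q : ℝ) :
    ∫ x in (0 : ℝ)..π,
        (arctan (4 * l * sin x / (4 * l ^ 2 - 1)) + π) * (sin x * (p + q * cos x ^ 2))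
      = 2 * π * (p + q / 3) - 4 * l * (1 - 4 * l ^ 2)
          * (p * (∫ x in (0 : ℝ)..π, cos x ^ 2 / sinCosQuad (1 + 4 * l ^ 2) (1 - 4 * l ^ 2) x)
            + q / 3
              * ∫ x in (0 : ℝ)..π, cos x ^ 4 / sinCosQuad (1 + 4 * l ^ 2) (1 - 4 * l ^ 2) x) := by
  have ha : 1 + 4 * l ^ 2 ≠ 0 := by positivity
  have hb : 1 - 4 * l ^ 2 ≠ 0 := sub_ne_zero.2 hl.symm
  have hv : ∀ x, HasDerivAt (fun x => -(p * cos x + q / 3 * cos x ^ 3))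
      (sin x * (p + q * cos x ^ 2)) x := fun x => by
    refine (((hasDerivAt_cos x).const_mul p).add (((hasDerivAt_cos x).pow 3).const_mul (q / 3))).neg
      |>.congr_deriv ?_
    ring
  rw [integral_mul_deriv_eq_deriv_mul (fun x _ => hasDerivAt_arctan_add_pi hl x) (fun x _ => hv x)
    (intervalIntegrable_div_sinCosQuad (by fun_prop) ha hb _ _)
    ((by fun_prop : Continuous fun x => sin x * (p + q * cos x ^ 2)).intervalIntegrable _ _)]
  have hu'v : ∀ x, -(4 * l * (1 - 4 * l ^ 2) * cos x) / sinCosQuad (1 + 4 * l ^ 2) (1 - 4 * l ^ 2) x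
      * -(p * cos x + q / 3 * cos x ^ 3)
      = 4 * l * (1 - 4 * l ^ 2) * (p * (cos x ^ 2 / sinCosQuad (1 + 4 * l ^ 2) (1 - 4 * l ^ 2) x)
        + q / 3 * (cos x ^ 4 / sinCosQuad (1 + 4 * l ^ 2) (1 - 4 * l ^ 2) x)) := fun x => by ring
  simp only [hu'v, integral_const_mul]
  have h2 := intervalIntegrable_div_sinCosQuad (f := fun x => cos x ^ 2) (by fun_prop) ha hb 0 π
  have h4 := intervalIntegrable_div_sinCosQuad (f := fun x => cos x ^ 4) (by fun_prop) ha hb 0 π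
  rw [integral_add (h2.const_mul p) (h4.const_mul (q / 3)), integral_const_mul, integral_const_mul]
  simp only [sin_pi, sin_zero, cos_pi, cos_zero, mul_zero, zero_div, arctan_zero, zero_add]
  ring

end PlaneWave

open PlaneWave

lemma planeWaveG_neg_left (l n₁ n₂ : ℝ) : planeWaveG l (-n₁) n₂ = planeWaveG l n₁ n₂ := by
  rw [planeWaveG, planeWaveG, abs_neg, neg_sq]

lemma planeWaveG_neg_right (l n₁ n₂ : ℝ) : planeWaveG l n₁ (-n₂) = planeWaveG l n₁ n₂ := by
  have hlog : log ((1 + 4 * l ^ 2 - 4 * l * -n₂) / (1 + 4 * l ^ 2 + 4 * l * -n₂))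
      = -log ((1 + 4 * l ^ 2 - 4 * l * n₂) / (1 + 4 * l ^ 2 + 4 * l * n₂)) := by
    rw [← log_inv, inv_div]; ring_nf
  rw [planeWaveG, planeWaveG, hlog, neg_sq]
  ring

lemma continuous_planeWaveG_sin_cos {l : ℝ} (hl : 4 * l ^ 2 ≠ 1) :
    Continuous fun x => planeWaveG l (sin x) (cos x) := by
  have hlog : Continuous fun x =>
      log ((1 + 4 * l ^ 2 - 4 * l * cos x) / (1 + 4 * l ^ 2 + 4 * l * cos x)) :=
    Continuous.log (by fun_prop (disch := exact fun x => (logArgs_pos hl x).2.ne'))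
      fun x => (div_pos (logArgs_pos hl x).1 (logArgs_pos hl x).2).ne'
  unfold planeWaveG
  fun_prop

lemma planeWaveG_sin_cos_of_sin_nonneg {l : ℝ} (hl : 4 * l ^ 2 ≠ 1) {x : ℝ} (hx : 0 ≤ sin x) :
    planeWaveG l (sin x) (cos x)
      = sin x ^ 2 / 3
        + l / 3 * ((log (1 + 4 * l ^ 2 - 4 * l * cos x) - log (1 + 4 * l ^ 2 + 4 * l * cos x))
          * (sin x ^ 2 * cos x))
        + (arctan (4 * l * sin x / (4 * l ^ 2 - 1)) + π)
          * (sin x * ((1 / (l * π ^ 2) - l / 3) + 2 * l / 3 * cos x ^ 2)) := by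
  obtain ⟨hA, hB⟩ := logArgs_pos hl x
  rw [planeWaveG, abs_of_nonneg hx, log_div hA.ne' hB.ne']
  ring

theorem integral_planeWaveG_sin_cos {l : ℝ} (hl₀ : 0 < l) (hl₁ : l < 1 / 2) :
    ∫ x in (0 : ℝ)..π, planeWaveG l (sin x) (cos x)
      = π / 6 - 2 * π * l / 9 + 2 / (π * l) - 2 / π := by
  have hl : 4 * l ^ 2 ≠ 1 := by nlinarith
  have ha : 0 < 1 + 4 * l ^ 2 := by positivity
  have hb : 0 < 1 - 4 * l ^ 2 := by nlinarith
  have hab : 1 + 4 * l ^ 2 ≠ 1 - 4 * l ^ 2 := by nlinarith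
  have hlog : IntervalIntegrable (fun x =>
      l / 3 * ((log (1 + 4 * l ^ 2 - 4 * l * cos x) - log (1 + 4 * l ^ 2 + 4 * l * cos x))
        * (sin x ^ 2 * cos x))) volume 0 π := by
    have hA := Continuous.log (by fun_prop) fun x => (logArgs_pos hl x).1.ne'
    have hB := Continuous.log (by fun_prop) fun x => (logArgs_pos hl x).2.ne'
    exact (by fun_prop : Continuous _).intervalIntegrable 0 π
  have hsin : IntervalIntegrable (fun x => sin x ^ 2 / 3) volume 0 π :=
    (by fun_prop : Continuous fun x => sin x ^ 2 / 3).intervalIntegrable 0 π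
  have harctan : IntervalIntegrable (fun x => (arctan (4 * l * sin x / (4 * l ^ 2 - 1)) + π)
      * (sin x * ((1 / (l * π ^ 2) - l / 3) + 2 * l / 3 * cos x ^ 2))) volume 0 π :=
    (by fun_prop : Continuous _).intervalIntegrable 0 π
  have hsin_nonneg : ∀ x ∈ Set.uIcc 0 π, 0 ≤ sin x := fun x hx => by
    rw [Set.uIcc_of_le pi_pos.le] at hx
    exact sin_nonneg_of_nonneg_of_le_pi hx.1 hx.2
  rw [integral_congr fun x hx => planeWaveG_sin_cos_of_sin_nonneg hl (hsin_nonneg x hx),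
    integral_add (hsin.add hlog) harctan, integral_add hsin hlog,
    integral_div, integral_const_mul, integral_sin_sq,
    integral_log_sub_log_mul_sin_sq_mul_cos hl, integral_arctan_add_pi_mul_sin_mul hl,
    integral_sin_pow_four_div_sinCosQuad ha hb hab, integral_cos_sq_div_sinCosQuad ha hb hab,
    integral_cos_pow_four_div_sinCosQuad ha hb hab]
  simp only [sin_zero, cos_zero, sin_pi, cos_pi]
  rw [show 1 + 4 * l ^ 2 + (1 - 4 * l ^ 2) = 2 by ring]
  have := pi_pos.ne'
  generalize hγ : 1 - 4 * l ^ 2 = γ at hb ⊢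
  have := hb.ne'
  field_simp
  subst hγ
  ring

theorem integral_planeWaveG_cos_sin_add_sin_cos {l : ℝ} (hl : 4 * l ^ 2 ≠ 1) :
    ∫ ν in (0 : ℝ)..π, (planeWaveG l (cos ν) (sin ν) + planeWaveG l (sin ν) (cos ν))
      = 2 * ∫ ν in (0 : ℝ)..π, planeWaveG l (sin ν) (cos ν) := by
  obtain ⟨g, hg⟩ : ∃ g : ℝ → ℝ, ∀ ν, planeWaveG l (sin ν) (cos ν) = g ν := ⟨_, fun _ => rfl⟩
  have hcont : Continuous g := by simpa only [← funext hg] using continuous_planeWaveG_sin_cos hl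
  have hper : Function.Periodic g π := fun ν => by
    rw [← hg, ← hg, sin_add_pi, cos_add_pi, planeWaveG_neg_left, planeWaveG_neg_right]
  have hshift : ∀ ν, planeWaveG l (cos ν) (sin ν) = g (ν + π / 2) := fun ν => by
    rw [← hg, sin_add_pi_div_two, cos_add_pi_div_two, planeWaveG_neg_right]
  simp only [hshift, hg]
  have hshift_int : IntervalIntegrable (fun ν => g (ν + π / 2)) volume 0 π :=
    (hcont.comp (continuous_add_const _)).intervalIntegrable _ _
  rw [integral_add hshift_int (hcont.intervalIntegrable _ _), integral_comp_add_right g, zero_add,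
    show π + π / 2 = π / 2 + π by ring, hper.intervalIntegral_add_eq (π / 2) 0, zero_add, two_mul]

theorem expectation_G_random_plane_wave (lam0 : ℝ) (h0 : 0 < lam0) (h1 : lam0 < 1 / 2) :
    (1 / π) * ∫ ν in (0 : ℝ)..π,
        (planeWaveG lam0 (Real.cos ν) (Real.sin ν)
          + planeWaveG lam0 (Real.sin ν) (Real.cos ν))
      = 4 / (π ^ 2 * lam0) - (4 / 9) * lam0 + 1 / 3 - 4 / π ^ 2 := by
  rw [integral_planeWaveG_cos_sin_add_sin_cos (by nlinarith), integral_planeWaveG_sin_cos h0 h1]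
  field_simp
  ring
end
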